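/- Let $p$ be an odd prime and $G$ the non-abelian group of order $p^3$ and exponent $p$. If a sequence $W$ over $G$ of length $p^3 + 3p - 3$ has at least $p^3 + p - 1$ terms lying in the center $Z(G)$, then $W$ has a product-one subsequence of length exactly $p^3$. -/

import Mathlib

/-!
The centre of a non-abelian group of order `p ^ 3` has order `p`: its index is a power of `p`,
it is not `1`, and it is not `p` because a cyclic quotient by the centre forces commutativity.
So the central terms live in a copy of `ℤ/pℤ`, where the Erdős–Ginzburg–Ziv theorem peels off
a product-one block of `p` terms as long as `2p - 1` terms remain. Since
`p ^ 3 + p - 1 = (p ^ 2 - 1) p + (2p - 1)`, this yields `p ^ 2` disjoint blocks, that is `p ^ 3`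
terms with product one, and central terms may be multiplied in any order.
-/

open Subgroup

theorem Multiset.exists_le_card_eq_mul_prod_eq_one {M : Type*} [CommMonoid M] {n : ℕ}
    (hEGZ : ∀ s : Multiset M, 2 * n - 1 ≤ card s → ∃ t ≤ s, card t = n ∧ t.prod = 1)
    (k : ℕ) {s : Multiset M} (hs : k * n + (2 * n - 1) ≤ card s) :
    ∃ t ≤ s, card t = (k + 1) * n ∧ t.prod = 1 := by
  classical
  induction k with
  | zero => simpa using hEGZ s (by simpa using hs)
  | succ k ih =>
    obtain ⟨t, hts, htn, ht⟩ := ih (le_trans (by gcongr; omega) hs)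
    have hrest : 2 * n - 1 ≤ card (s - t) := by
      rw [card_sub hts, htn]
      rw [add_mul, one_mul] at hs ⊢
      omega
    obtain ⟨u, hus, hun, hu⟩ := hEGZ (s - t) hrest
    refine ⟨t + u, ?_, by rw [card_add, htn, hun]; ring, by rw [prod_add, ht, hu, one_mul]⟩
    calc t + u ≤ t + (s - t) := add_le_add_right hus t
      _ = s := add_tsub_cancel_of_le hts

theorem IsCyclic.exists_le_card_eq_prod_eq_one {C : Type*} [CommGroup C] [hC : IsCyclic C]
    (s : Multiset C) (hs : 2 * Nat.card C - 1 ≤ Multiset.card s) :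
    ∃ t ≤ s, Multiset.card t = Nat.card C ∧ t.prod = 1 := by
  let e := zmodCyclicMulEquiv hC
  obtain ⟨t, hts, htn, ht⟩ :=
    ZMod.erdos_ginzburg_ziv_multiset (s.map fun c ↦ (e.symm c).toAdd) (by simpa using hs)
  refine ⟨t.map fun a ↦ e (.ofAdd a), ?_, by simpa using htn, ?_⟩
  · simpa [Multiset.map_map, Function.comp_def] using
      Multiset.map_le_map (f := fun a ↦ e (.ofAdd a)) hts
  · rw [← Function.comp_def, ← Multiset.map_map, Multiset.prod_hom, ← ofAdd_multiset_prod, ht]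
    simp

namespace Subgroup

variable {G : Type*} [Group G]

theorem exists_list_le_length_eq_mul_prod_eq_one (H : Subgroup G) [hH : IsCyclic H] (k : ℕ)
    (Z : Multiset G) (hZ : ∀ z ∈ Z, z ∈ H)
    (hcard : k * Nat.card H + (2 * Nat.card H - 1) ≤ Multiset.card Z) :
    ∃ l : List G, (l : Multiset G) ≤ Z ∧ l.length = (k + 1) * Nat.card H ∧ l.prod = 1 := by
  let _ := hH.commGroup
  obtain ⟨t, hts, htn, ht⟩ := Multiset.exists_le_card_eq_mul_prod_eq_one
    IsCyclic.exists_le_card_eq_prod_eq_one k (s := Z.pmap Subtype.mk hZ) (by simpa using hcard)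
  refine ⟨t.toList.map H.subtype, ?_, by simpa using htn, ?_⟩
  · rw [← Multiset.map_coe, Multiset.coe_toList]
    simpa [Multiset.map_pmap, Multiset.pmap_eq_map _ fun a ↦ a] using
      Multiset.map_le_map (f := H.subtype) hts
  · rw [List.prod_hom, Multiset.prod_toList, ht, map_one]

theorem index_center_ne_prime {q : ℕ} (hq : q.Prime) : (center G).index ≠ q := by
  intro h
  have : IsCyclic (G ⧸ center G) :=
    isCyclic_of_prime_card (hp := ⟨hq⟩) (by rw [← h, index_eq_card])
  have := isMulCommutative_of_isCyclic_quotient_center_self G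
  exact hq.ne_one (h ▸ index_eq_one.mpr center_eq_top)

theorem card_center_eq_prime_of_card_eq_prime_pow_three {p : ℕ} [hp : Fact p.Prime]
    (hG : Nat.card G = p ^ 3) (hcomm : ¬IsMulCommutative G) :
    Nat.card (center G) = p := by
  obtain ⟨k, hk0, hk⟩ := IsPGroup.card_center_eq_prime_pow hG three_pos
  obtain ⟨j, -, hj⟩ :=
    (Nat.dvd_prime_pow hp.out).mp ⟨_, ((center G).index_mul_card.trans hG).symm⟩
  have hkj : k + j = 3 := by
    refine Nat.pow_right_injective hp.out.two_le ?_
    simp only [pow_add, ← hk, ← hj, card_mul_index, hG]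
  have hj0 : j ≠ 0 := by
    rintro rfl
    exact hcomm (center_eq_top_iff.mp (index_eq_one.mp (by simpa using hj)))
  have hj1 : j ≠ 1 := by
    rintro rfl
    exact index_center_ne_prime hp.out (by simpa using hj)
  rw [hk, show k = 1 by omega, pow_one]

end Subgroup

theorem stmt_12_general (p : ℕ) (hp : p.Prime)
    {G : Type*} [Group G] [Fintype G]
    (hcard : Fintype.card G = p ^ 3)
    (hna : ∃ a b : G, a * b ≠ b * a)
    (W : Multiset G)
    (hcen : ∃ Z : Multiset G, Z ≤ W ∧ p ^ 3 + p - 1 ≤ Multiset.card Z ∧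
      ∀ z ∈ Z, z ∈ Subgroup.center G) :
    ∃ l : List G, (l : Multiset G) ≤ W ∧ l.length = p ^ 3 ∧ l.prod = 1 := by
  have := Fact.mk hp
  obtain ⟨Z, hZW, hZcard, hZ⟩ := hcen
  have hcenter : Nat.card (center G) = p := by
    refine card_center_eq_prime_of_card_eq_prime_pow_three
      (by rw [Nat.card_eq_fintype_card, hcard]) fun _ ↦ ?_
    obtain ⟨a, b, hab⟩ := hna
    exact hab (mul_comm' a b)
  have := isCyclic_of_prime_card hcenter
  have hp2 : p ^ 2 - 1 + 1 = p ^ 2 := Nat.sub_add_cancel (Nat.one_le_pow _ _ hp.pos)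
  have hZlen : (p ^ 2 - 1) * p + (2 * p - 1) ≤ Multiset.card Z := by
    have hp3 : p ≤ p ^ 3 := Nat.le_self_pow three_ne_zero p
    have hmul : (p ^ 2 - 1) * p = p ^ 3 - p := by rw [Nat.sub_mul, one_mul, ← pow_succ]
    have := hp.pos
    omega
  obtain ⟨l, hlZ, hlen, hl⟩ :=
    (center G).exists_list_le_length_eq_mul_prod_eq_one (p ^ 2 - 1) Z hZ (by rwa [hcenter])
  exact ⟨l, hlZ.trans hZW, by rw [hlen, hcenter, hp2]; ring, hl⟩

theorem stmt_12 (p : ℕ) (hp : p.Prime) (hodd : Odd p)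
    {G : Type*} [Group G] [Fintype G]
    (hcard : Fintype.card G = p ^ 3)
    (hexp : Monoid.exponent G = p)
    (hna : ∃ a b : G, a * b ≠ b * a)
    (W : Multiset G) (hlen : Multiset.card W = p ^ 3 + 3 * p - 3)
    (hcen : ∃ Z : Multiset G, Z ≤ W ∧ p ^ 3 + p - 1 ≤ Multiset.card Z ∧
      ∀ z ∈ Z, z ∈ Subgroup.center G) :
    ∃ l : List G, (l : Multiset G) ≤ W ∧ l.length = p ^ 3 ∧ l.prod = 1 :=
  stmt_12_general p hp hcard hna W hcen
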